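/- Removing a locally inconsistent state from a BMTS does not change the semantics of any other state: if Φ(s) is unsatisfiable, then for every state t ≠ s, the set of implementations of t in the original system equals that in the system with s (and all transitions involving s) removed. -/

import Mathlib

/-- Boolean formulae over a set of atomic propositions `X`. -/
inductive BForm (X : Type) : Type where
  | tt : BForm X
  | var : X → BForm X
  | neg : BForm X → BForm X
  | and : BForm X → BForm X → BForm X
  | or : BForm X → BForm X → BForm X

/-- Satisfaction of a Boolean formula under a valuation (set of true atoms). -/
def BForm.sat {X : Type} (ν : Set X) : BForm X → Prop
  | .tt => True
  | .var x => x ∈ ν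
  | .neg φ => ¬ BForm.sat ν φ
  | .and φ ψ => BForm.sat ν φ ∧ BForm.sat ν ψ
  | .or φ ψ => BForm.sat ν φ ∨ BForm.sat ν ψ

/-- Substitute a formula for each atom. -/
def BForm.map {X Y : Type} (f : X → BForm Y) : BForm X → BForm Y
  | .tt => .tt
  | .var x => f x
  | .neg φ => .neg (BForm.map f φ)
  | .and φ ψ => .and (BForm.map f φ) (BForm.map f ψ)
  | .or φ ψ => .or (BForm.map f φ) (BForm.map f ψ)

def BForm.xor {X : Type} (φ ψ : BForm X) : BForm X :=
  .or (.and φ (.neg ψ)) (.and (.neg φ) ψ)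

def BForm.iff {X : Type} (φ ψ : BForm X) : BForm X :=
  .and (.or (.neg φ) ψ) (.or φ (.neg ψ))

/-- A parametric modal transition system over alphabet `A`, states `S`, parameters `P`. -/
structure PMTS (A S P : Type) : Type where
  T : Set (S × A × S)
  Φ : S → BForm ((A × S) ⊕ P)

/-- A Boolean modal transition system is a PMTS with an empty parameter set. -/
abbrev BMTS (A S : Type) := PMTS A S Empty

/-- `T(s)`: the outgoing transitions of `s`. -/
def PMTS.Tsucc {A S P : Type} (M : PMTS A S P) (s : S) : Set (A × S) :=
  {p | (s, p.1, p.2) ∈ M.T}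

/-- `Tran_ν(s)`: admissible sets of outgoing transitions under parameter valuation `ν`. -/
def PMTS.Tran {A S P : Type} (M : PMTS A S P) (ν : Set P) (s : S) : Set (Set (A × S)) :=
  {E | E ⊆ M.Tsucc s ∧ BForm.sat (Sum.inl '' E ∪ Sum.inr '' ν) (M.Φ s)}

open Classical in
/-- Substitution of truth values for parameters according to a valuation `ν`. -/
noncomputable def paramSubst {X P : Type} (ν : Set P) : X ⊕ P → BForm (X ⊕ Empty)
  | Sum.inl x => .var (Sum.inl x)
  | Sum.inr p => if p ∈ ν then .tt else .neg .tt

/-- The BMTS `M^ν` induced by a parameter valuation `ν`. -/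
noncomputable def PMTS.toBMTS {A S P : Type} (M : PMTS A S P) (ν : Set P) : BMTS A S where
  T := M.T
  Φ := fun s => (M.Φ s).map (paramSubst ν)

/-- The modal-refinement condition on a relation `R`, w.r.t. valuations `μ` and `ν`. -/
def RefCond {A S1 S2 P1 P2 : Type} (M1 : PMTS A S1 P1) (M2 : PMTS A S2 P2)
    (μ : Set P1) (ν : Set P2) (R : Set (S1 × S2)) : Prop :=
  ∀ p ∈ R, ∀ Ms ∈ M1.Tran μ p.1, ∃ N ∈ M2.Tran ν p.2,
    (∀ q ∈ Ms, ∃ t' : S2, (q.1, t') ∈ N ∧ (q.2, t') ∈ R) ∧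
    (∀ q ∈ N, ∃ s' : S1, (q.1, s') ∈ Ms ∧ (s', q.2) ∈ R)

/-- `R` is a modal refinement relation between two BMTS. -/
def IsRefRel {A S1 S2 : Type} (M1 : BMTS A S1) (M2 : BMTS A S2) (R : Set (S1 × S2)) : Prop :=
  RefCond M1 M2 ∅ ∅ R

/-- Modal refinement on BMTS. -/
def BRefines {A S1 S2 : Type} (M1 : BMTS A S1) (M2 : BMTS A S2) (s : S1) (t : S2) : Prop :=
  ∃ R : Set (S1 × S2), (s, t) ∈ R ∧ IsRefRel M1 M2 R

/-- Modal refinement on PMTS (valuation-wise definition). -/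
def PRefines {A S1 S2 P1 P2 : Type} (M1 : PMTS A S1 P1) (M2 : PMTS A S2 P2)
    (s : S1) (t : S2) : Prop :=
  ∀ μ : Set P1, ∃ ν : Set P2, BRefines (M1.toBMTS μ) (M2.toBMTS ν) s t

/-- An implementation: every state's only admissible transition set is its full set of
transitions (i.e. `Φ(s)` is the conjunction of all outgoing transitions). -/
def PMTS.IsImplementation {A S : Type} (M : BMTS A S) : Prop :=
  ∀ s : S, M.Tran ∅ s = {M.Tsucc s}

/-- Thorough refinement: inclusion of sets of implementations. -/
def ThoroughRefines {A S1 S2 P1 P2 : Type} (M1 : PMTS A S1 P1) (M2 : PMTS A S2 P2)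
    (s : S1) (t : S2) : Prop :=
  ∀ (SI : Type) (I : BMTS A SI) (i : SI), I.IsImplementation →
    PRefines I M1 i s → PRefines I M2 i t

/-- A PMTS is deterministic if no state has two distinct successors under the same action. -/
def PMTS.Deterministic {A S P : Type} (M : PMTS A S P) : Prop :=
  ∀ s a t t', (s, a, t) ∈ M.T → (s, a, t') ∈ M.T → t = t'

/-- Global (semantic) consistency: every state has an implementation. -/
def PMTS.SemConsistent {A S : Type} (M : BMTS A S) : Prop :=
  ∀ s : S, ∃ (SI : Type) (I : BMTS A SI) (i : SI), I.IsImplementation ∧ BRefines I M i s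

/-- Parameter substitution used in the de-parameterization, also retagging states
with the valuation. -/
def deParamSubst {A S P : Type} [DecidableEq P] (ν : Finset P) :
    (A × S) ⊕ P → BForm ((A × Option (S × Finset P)) ⊕ Empty)
  | Sum.inl q => .var (Sum.inl (q.1, some (q.2, ν)))
  | Sum.inr p => if p ∈ ν then .tt else .neg .tt

/-- The de-parameterization `M^B` of a PMTS `M` with initial state `s0`.
The state `none` plays the rôle of `s0^B`. -/
noncomputable def PMTS.deParam {A S P : Type} [Fintype P] [DecidableEq P] (M : PMTS A S P) (s0 : S) :
    BMTS A (Option (S × Finset P)) where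
  T := {x | (∃ a s ν, x = (none, a, some (s, ν)) ∧ (s0, a, s) ∈ M.T) ∨
            (∃ s a s' ν, x = (some (s, ν), a, some (s', ν)) ∧ (s, a, s') ∈ M.T)}
  Φ := fun st => match st with
    | none => (Finset.univ : Finset (Finset P)).toList.foldr
        (fun ν acc => BForm.xor ((M.Φ s0).map (deParamSubst ν)) acc) (.neg .tt)
    | some (s, ν) => (M.Φ s).map (deParamSubst ν)

/-- The set of `a`-successors of a set of states. -/
def PMTS.succSet {A S P : Type} (M : PMTS A S P) (X : Set S) (a : A) : Set S :=
  {s' | ∃ s ∈ X, (s, a, s') ∈ M.T}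

/-- The deterministic hull `𝒟(M)` of a PMTS (powerset construction). -/
noncomputable def PMTS.detHull {A S P : Type} [Fintype S] (M : PMTS A S P) :
    PMTS A (Set S) P where
  T := {x | x.2.2 = M.succSet x.1 x.2.1}
  Φ := fun X => ((Set.toFinite X).toFinset).toList.foldr
    (fun s acc => .or ((M.Φ s).map (fun y => match y with
      | Sum.inl q => .var (Sum.inl (q.1, M.succSet X q.1))
      | Sum.inr p => .var (Sum.inr p))) acc) (.neg .tt)

open Classical in
/-- The parameter-free hull `𝒫(M)` of a PMTS. -/
noncomputable def PMTS.pfHull {A S P : Type} [Fintype P] [DecidableEq P] (M : PMTS A S P) :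
    BMTS A S where
  T := M.T
  Φ := fun s => (Finset.univ : Finset (Finset P)).toList.foldr
    (fun ν acc => .or ((M.Φ s).map (paramSubst (↑ν : Set P))) acc) (.neg .tt)

open Classical in
/-- Removing a state `s` (and all transitions involving it) from a BMTS. -/
noncomputable def PMTS.removeState {A S : Type} (M : BMTS A S) (s : S) :
    BMTS A {t : S // t ≠ s} where
  T := {x | (x.1.1, x.2.1, x.2.2.1) ∈ M.T}
  Φ := fun t => (M.Φ t.1).map (fun y => match y with
    | Sum.inl q => if h : q.2 = s then .neg .tt else .var (Sum.inl (q.1, ⟨q.2, h⟩))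
    | Sum.inr e => Empty.elim e)

/-- The PMTS witnessing the unavoidable exponential blowup of de-parameterization:
actions are the parameters, and both steps must take exactly the transitions whose
parameter is true. -/
noncomputable def blowupPMTS (P : Type) [Fintype P] [DecidableEq P] : PMTS P (Fin 3) P where
  T := {x | ∃ p : P, x = (0, p, 1) ∨ x = (1, p, 2)}
  Φ := fun s =>
    if s = 0 then
      (Finset.univ : Finset P).toList.foldr
        (fun p acc => .and (BForm.iff (.var (Sum.inl (p, (1 : Fin 3)))) (.var (Sum.inr p))) acc) .tt
    else if s = 1 then
      (Finset.univ : Finset P).toList.foldr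
        (fun p acc => .and (BForm.iff (.var (Sum.inl (p, (2 : Fin 3)))) (.var (Sum.inr p))) acc) .tt
    else .tt

/-- A classical modal transition system. -/
structure MTS (A S : Type) where
  may : Set (S × A × S)
  must : Set (S × A × S)
  must_sub : must ⊆ may

/-- Classical MTS modal refinement. -/
def MTSRefines {A S1 S2 : Type} (N1 : MTS A S1) (N2 : MTS A S2) (s0 : S1) (t0 : S2) : Prop :=
  ∃ R : Set (S1 × S2), (s0, t0) ∈ R ∧ ∀ p ∈ R,
    (∀ a s', (p.1, a, s') ∈ N1.may → ∃ t', (p.2, a, t') ∈ N2.may ∧ (s', t') ∈ R) ∧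
    (∀ a t', (p.2, a, t') ∈ N2.must → ∃ s', (p.1, a, s') ∈ N1.must ∧ (s', t') ∈ R)

/-- A BMTS corresponds to an MTS when its transitions are the may-transitions and the
admissible transition sets are exactly those between the must- and may-successors
(i.e. `Φ(s)` is the conjunction of the must-transitions of `s`). -/
def Corresponds {A S : Type} (N : MTS A S) (M : BMTS A S) : Prop :=
  M.T = N.may ∧
  ∀ s, M.Tran ∅ s = {E | {q : A × S | (s, q.1, q.2) ∈ N.must} ⊆ E ∧ E ⊆ M.Tsucc s}

/-- The `Avoid` set: the least set of pairs `(s, 𝒯)` closed under the rules of the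
thorough-refinement algorithm for BMTS. -/
inductive Avoid {A S : Type} (M : BMTS A S) : S → Set S → Prop
  | empty (s : S) : Avoid M s ∅
  | step (s : S) (𝒯 : Set S) (Ms : Set (A × S)) (later : A → S → Set (A × S) → Set S)
      (hM : Ms ∈ M.Tran ∅ s)
      (h1 : ∀ t ∈ 𝒯, ∀ Nt ∈ M.Tran ∅ t, ∃ a : A,
        (∃ ta, (a, ta) ∈ Nt ∧ ∀ sa, (a, sa) ∈ Ms →
          ∀ f, (∃ t' ∈ 𝒯, f ∈ M.Tran ∅ t') → ta ∈ later a sa f) ∨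
        (∃ sa, (a, sa) ∈ Ms ∧ ∀ ta, (a, ta) ∈ Nt → ta ∈ later a sa Nt))
      (h2 : ∀ f, (∃ t' ∈ 𝒯, f ∈ M.Tran ∅ t') →
        ∀ a sa, (a, sa) ∈ Ms → Avoid M sa (later a sa f)) :
      Avoid M s 𝒯

/-- The decreasing sequence `Rⁿ_{μ,ν}` of bounded modal refinement relations. -/
def BoundedRel {A S1 S2 P1 P2 : Type} (M1 : PMTS A S1 P1) (M2 : PMTS A S2 P2)
    (μ : Set P1) (ν : Set P2) : ℕ → Set (S1 × S2)
  | 0 => Set.univ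
  | n + 1 => {p | ∀ Ms ∈ M1.Tran μ p.1, ∃ N ∈ M2.Tran ν p.2,
      (∀ q ∈ Ms, ∃ t' : S2, (q.1, t') ∈ N ∧ (q.2, t') ∈ BoundedRel M1 M2 μ ν n) ∧
      (∀ q ∈ N, ∃ s' : S1, (q.1, s') ∈ Ms ∧ (s', q.2) ∈ BoundedRel M1 M2 μ ν n)}

/-- The de-negation DMTS `M^D` of a BMTS: its states are the admissible transition sets. -/
noncomputable def PMTS.deNeg {A S : Type} [Fintype A] [Fintype S] (M : BMTS A S) :
    BMTS A (Set (A × S)) where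
  T := {x | ∃ s' : S, (x.2.1, s') ∈ x.1 ∧ x.2.2 ∈ M.Tran ∅ s'}
  Φ := fun E => ((Set.toFinite E).toFinset).toList.foldr
    (fun q acc => .and
      (((Set.toFinite (M.Tran ∅ q.2)).toFinset).toList.foldr
        (fun M' acc2 => .or (.var (Sum.inl (q.1, M'))) acc2) (.neg .tt)) acc) .tt


/-! An unsatisfiable `Φ(s)` admits no transition set, whereas every implementation state admits
one, and a refinement relation passes admissibility from left to right. Hence no refinement
relation from an implementation ever reaches `s`, so refinement relations into `M` and into `M`
with `s` removed correspond along the inclusion of states. The removal turns the atoms that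
mention `s` into falsity, which does not affect `Φ(t)` on transition sets avoiding `s`. -/

theorem BForm.sat_map {X Y : Type} (f : X → BForm Y) (ν : Set Y) (φ : BForm X) :
    (φ.map f).sat ν ↔ φ.sat {x | (f x).sat ν} := by
  induction φ with
  | tt | var => rfl
  | neg φ ih => simp only [BForm.map, BForm.sat, ih]
  | and φ ψ ihφ ihψ => simp only [BForm.map, BForm.sat, ihφ, ihψ]
  | or φ ψ ihφ ihψ => simp only [BForm.map, BForm.sat, ihφ, ihψ]

namespace PMTS

variable {A S : Type}

theorem tran_eq_empty_of_unsat (M : BMTS A S) {s : S}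
    (hs : ∀ V : Set ((A × S) ⊕ Empty), ¬ (M.Φ s).sat V) : M.Tran ∅ s = ∅ :=
  Set.eq_empty_of_forall_notMem fun _ hE => hs _ hE.2

theorem IsImplementation.tran_nonempty {M : BMTS A S} (hM : M.IsImplementation) (s : S) :
    (M.Tran ∅ s).Nonempty := by
  rw [hM s]
  exact Set.singleton_nonempty _

theorem removeState_tsucc (M : BMTS A S) (s : S) (t : {t : S // t ≠ s}) :
    (M.removeState s).Tsucc t = Prod.map id Subtype.val ⁻¹' M.Tsucc t.1 :=
  rfl

theorem removeState_sat_iff (M : BMTS A S) (s : S) (t : {t : S // t ≠ s})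
    (E : Set (A × {t : S // t ≠ s})) :
    ((M.removeState s).Φ t).sat (Sum.inl '' E ∪ Sum.inr '' ∅) ↔
      (M.Φ t.1).sat (Sum.inl '' (Prod.map id Subtype.val '' E) ∪ Sum.inr '' ∅) := by
  unfold removeState
  rw [BForm.sat_map]
  congr! 1
  ext (⟨a, v⟩ | e)
  · by_cases h : v = s
    · subst h
      simp [BForm.sat]
    · simp [BForm.sat, h]
  · exact e.elim

theorem removeState_tran_iff (M : BMTS A S) (s : S) (t : {t : S // t ≠ s})
    (E : Set (A × {t : S // t ≠ s})) :
    E ∈ (M.removeState s).Tran ∅ t ↔ Prod.map id Subtype.val '' E ∈ M.Tran ∅ t.1 :=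
  Iff.and (by rw [removeState_tsucc, Set.image_subset_iff]) (removeState_sat_iff M s t E)

end PMTS

section

variable {A S SI : Type} {I : BMTS A SI} {M : BMTS A S} {s : S}

theorem IsRefRel.tran_nonempty {S1 S2 : Type} {M1 : BMTS A S1} {M2 : BMTS A S2}
    {R : Set (S1 × S2)} (hR : IsRefRel M1 M2 R) {u : S1} {t : S2} (hut : (u, t) ∈ R)
    (hu : (M1.Tran ∅ u).Nonempty) : (M2.Tran ∅ t).Nonempty :=
  let ⟨_, hE⟩ := hu
  let ⟨N, hN, _⟩ := hR (u, t) hut _ hE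
  ⟨N, hN⟩

theorem IsRefRel.notMem_of_unsat {R : Set (SI × S)} (hR : IsRefRel I M R)
    (hI : I.IsImplementation) (hs : ∀ V : Set ((A × S) ⊕ Empty), ¬ (M.Φ s).sat V) (u : SI) :
    (u, s) ∉ R := fun hu => by
  simpa [M.tran_eq_empty_of_unsat hs] using hR.tran_nonempty hu (hI.tran_nonempty u)

theorem IsRefRel.preimage_removeState {R : Set (SI × S)} (hR : IsRefRel I M R)
    (hRs : ∀ u, (u, s) ∉ R) :
    IsRefRel I (M.removeState s) (Prod.map id Subtype.val ⁻¹' R) := by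
  rintro ⟨u, t⟩ hut E hE
  obtain ⟨N, hN, hfwd, hbwd⟩ := hR (u, t.1) hut E hE
  have hN_range : N ⊆ Set.range (Prod.map id (Subtype.val : {t : S // t ≠ s} → S)) :=
    fun q hq =>
      let ⟨_, _, hq'⟩ := hbwd q hq
      ⟨(q.1, ⟨q.2, fun h : q.2 = s => hRs _ (h ▸ hq')⟩), rfl⟩
  refine ⟨Prod.map id Subtype.val ⁻¹' N, ?_, ?_, fun q hq => hbwd _ hq⟩
  · rwa [PMTS.removeState_tran_iff, Set.image_preimage_eq_of_subset hN_range]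
  · intro q hq
    obtain ⟨t', ht'N, ht'R⟩ := hfwd q hq
    exact ⟨⟨t', fun h => hRs _ (h ▸ ht'R)⟩, ht'N, ht'R⟩

theorem IsRefRel.image_removeState {R : Set (SI × {t : S // t ≠ s})}
    (hR : IsRefRel I (M.removeState s) R) : IsRefRel I M (Prod.map id Subtype.val '' R) := by
  rintro _ ⟨⟨u, t⟩, hut, rfl⟩ E hE
  obtain ⟨N, hN, hfwd, hbwd⟩ := hR (u, t) hut E hE
  refine ⟨Prod.map id Subtype.val '' N, (PMTS.removeState_tran_iff M s t N).mp hN, ?_, ?_⟩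
  · intro q hq
    obtain ⟨t', ht'N, ht'R⟩ := hfwd q hq
    exact ⟨t'.1, ⟨_, ht'N, rfl⟩, _, ht'R, rfl⟩
  · rintro _ ⟨q, hq, rfl⟩
    obtain ⟨u', hu'E, hu'R⟩ := hbwd q hq
    exact ⟨u', hu'E, _, hu'R, rfl⟩

end

theorem remove_inconsistent_state_preserves_semantics {A S : Type}
    (M : BMTS A S) (s : S) (hs : ∀ V : Set ((A × S) ⊕ Empty), ¬ (M.Φ s).sat V)
    (t : S) (ht : t ≠ s)
    (SI : Type) (I : BMTS A SI) (i : SI) (hI : I.IsImplementation) :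
    BRefines I M i t ↔ BRefines I (M.removeState s) i ⟨t, ht⟩ := by
  constructor
  · rintro ⟨R, hiR, hR⟩
    exact ⟨_, hiR, hR.preimage_removeState (hR.notMem_of_unsat hI hs)⟩
  · rintro ⟨R, hiR, hR⟩
    exact ⟨_, Set.mem_image_of_mem (Prod.map id Subtype.val) hiR, hR.image_removeState⟩
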